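/- As y → 0⁺, the mean M(y) = Σ_{r=0}^∞ (1 − φ_r(y)) satisfies M(y) = y − (1/4) y² + (1/12) y³ − (7/288) y⁴ + (17/2880) y⁵ − (619/518400) y⁶ + O(y⁷). -/

import Mathlib

open scoped BigOperators

/-- `σ` has an increasing subsequence of length `l`. -/
def hasIncSubseq (k : ℕ) (σ : Equiv.Perm (Fin k)) (l : ℕ) : Prop :=
  ∃ s : Fin l → Fin k, StrictMono s ∧ StrictMono (⇑σ ∘ s)

/-- `f k r`: the number of permutations of `{1,…,k}` all of whose increasing
subsequences have length at most `r`. -/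
noncomputable def f (k r : ℕ) : ℕ :=
  Nat.card {σ : Equiv.Perm (Fin k) // ∀ l, hasIncSubseq k σ l → l ≤ r}

/-- `D r t = Σ_{k≥0} f_{k,r} t^{2k}/(k!)²`. -/
noncomputable def D (r : ℕ) (t : ℝ) : ℝ :=
  ∑' k : ℕ, (f k r : ℝ) * t ^ (2 * k) / ((Nat.factorial k : ℝ)) ^ 2

/-- `F(r;y) = e^{-y} Σ_{k≥r} R_{k,r} y^k/(k!)²` with `R_{k,r} = k! - f_{k,r-1}`. -/
noncomputable def Fdist (r : ℕ) (y : ℝ) : ℝ :=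
  Real.exp (-y) *
    ∑' k : ℕ, (((r + k).factorial : ℝ) - (f (r + k) (r - 1) : ℝ)) * y ^ (r + k)
      / (((r + k).factorial : ℝ)) ^ 2

/-- `b j t = I_j(2t) = Σ_{m≥0} t^{2m+j}/(m!(m+j)!)`. -/
noncomputable def b (j : ℕ) (t : ℝ) : ℝ :=
  ∑' m : ℕ, t ^ (2 * m + j) / ((Nat.factorial m : ℝ) * (Nat.factorial (m + j) : ℝ))

/-- `φ_r(y) = e^{-y} D_r(√y)`. -/
noncomputable def phi (r : ℕ) (y : ℝ) : ℝ := Real.exp (-y) * D r (Real.sqrt y)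

/-- First moment `M(y) = Σ_{r≥0} (1 - φ_r(y))`. -/
noncomputable def M (y : ℝ) : ℝ := ∑' r : ℕ, (1 - phi r y)

/-- Second moment `S(y) = Σ_{r≥0} (2r+1)(1 - φ_r(y))`. -/
noncomputable def S (y : ℝ) : ℝ := ∑' r : ℕ, (2 * (r : ℝ) + 1) * (1 - phi r y)

/-- Variance `V(y) = S(y) - M(y)²`. -/
noncomputable def V (y : ℝ) : ℝ := S y - (M y) ^ 2

/-!
Since `k ! - f k r` counts the permutations with `ℓ_k > r`, summing
`1 - φ_r(y) = e^{-y} ∑_k (k ! - f k r) y^k / (k !)²` over `r` gives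
`M(y) = e^{-y} ∑_k L_k y^k / (k !)²` with `L_k = ∑_σ ℓ_k(σ)`, the mean of `ℓ` over a Poisson(`y`)
number of letters. Multiplying out the exponential series turns this into a power series whose
coefficients are bounded by `e`, so `M` equals its degree-6 Taylor polynomial up to `O(y⁷)`; that
polynomial only involves `L_0, …, L_6`, which are counted by brute force.
-/

open Finset Real
open scoped Nat

lemma hasIncSubseq_of_le {k : ℕ} {σ : Equiv.Perm (Fin k)} {m l : ℕ} (hml : m ≤ l)
    (h : hasIncSubseq k σ l) : hasIncSubseq k σ m := by
  obtain ⟨s, hs, hσs⟩ := h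
  exact ⟨s ∘ Fin.castLE hml, hs.comp (Fin.strictMono_castLE hml),
    hσs.comp (Fin.strictMono_castLE hml)⟩

lemma le_of_hasIncSubseq {k l : ℕ} {σ : Equiv.Perm (Fin k)} (h : hasIncSubseq k σ l) :
    l ≤ k := by
  obtain ⟨s, hs, -⟩ := h
  simpa using Fintype.card_le_of_injective s hs.injective

lemma f_le_factorial (k r : ℕ) : f k r ≤ k ! := by
  simpa [f, Fintype.card_perm] using Nat.card_le_card_of_injective _ (Subtype.val_injective
    (p := fun σ : Equiv.Perm (Fin k) => ∀ l, hasIncSubseq k σ l → l ≤ r))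

lemma f_eq_factorial_of_le {k r : ℕ} (hkr : k ≤ r) : f k r = k ! := by
  rw [f, Nat.card_congr (Equiv.subtypeUnivEquiv fun _ _ hl => (le_of_hasIncSubseq hl).trans hkr)]
  simp [Fintype.card_perm]

lemma List.Pairwise.sublist_finRange {k : ℕ} {l : List (Fin k)} (h : l.Pairwise (· < ·)) :
    l.Sublist (List.finRange k) :=
  List.sublist_of_subperm_of_pairwise (r := (· ≤ ·))
    (List.subperm_of_subset (h.imp ne_of_lt) fun x _ => List.mem_finRange x)
    (h.imp le_of_lt) ((List.pairwise_lt_finRange k).imp le_of_lt)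

lemma hasIncSubseq_iff_exists_sublistsLen {k m : ℕ} {σ : Equiv.Perm (Fin k)} :
    hasIncSubseq k σ m ↔ ∃ l ∈ (List.finRange k).sublistsLen m, (l.map σ).Pairwise (· < ·) := by
  constructor
  · rintro ⟨s, hs, hσs⟩
    refine ⟨List.ofFn s, List.mem_sublistsLen.2
      ⟨(List.pairwise_ofFn.2 fun _ _ h => hs h).sublist_finRange, List.length_ofFn⟩, ?_⟩
    rw [List.map_ofFn]
    exact List.pairwise_ofFn.2 fun _ _ h => hσs h
  · rintro ⟨l, hl, hσl⟩
    obtain ⟨hsub, rfl⟩ := List.mem_sublistsLen.1 hl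
    have hl : l.Pairwise (· < ·) := (List.pairwise_lt_finRange k).sublist hsub
    refine ⟨fun i => l[i.1], fun i j hij => List.pairwise_iff_getElem.1 hl _ _ _ _ hij,
      fun i j hij => ?_⟩
    simpa using List.pairwise_iff_getElem.1 hσl i j (by simp) (by simp) hij

instance (k m : ℕ) (σ : Equiv.Perm (Fin k)) : Decidable (hasIncSubseq k σ m) :=
  decidable_of_iff _ hasIncSubseq_iff_exists_sublistsLen.symm

lemma f_eq_card_filter (k r : ℕ) :
    f k r = #{σ : Equiv.Perm (Fin k) | ¬ hasIncSubseq k σ (r + 1)} := by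
  have hiff (σ : Equiv.Perm (Fin k)) :
      (∀ l, hasIncSubseq k σ l → l ≤ r) ↔ ¬ hasIncSubseq k σ (r + 1) :=
    ⟨fun h hr => by simpa using h _ hr,
      fun h l hl => not_lt.1 fun hrl => h (hasIncSubseq_of_le hrl hl)⟩
  rw [f, Nat.card_congr (Equiv.subtypeEquivRight hiff), Nat.card_eq_fintype_card,
    Fintype.card_subtype]

noncomputable def lisTotal (k : ℕ) : ℕ := ∑ r ∈ range k, ((k !) - f k r)

set_option maxRecDepth 100000 in
lemma lisTotal_values :
    lisTotal 0 = 0 ∧ lisTotal 1 = 1 ∧ lisTotal 2 = 3 ∧ lisTotal 3 = 12 ∧ lisTotal 4 = 58 ∧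
      lisTotal 5 = 335 ∧ lisTotal 6 = 2261 := by
  simp only [lisTotal, f_eq_card_filter]
  decide

lemma lisTotal_le (k : ℕ) : lisTotal k ≤ k * k ! := by
  simpa [lisTotal] using sum_le_sum fun r (_ : r ∈ range k) => Nat.sub_le (k !) (f k r)

noncomputable def lisGtCoeff (r k : ℕ) : ℝ := ((k ! : ℝ) - f k r) / (k ! : ℝ) ^ 2

lemma lisGtCoeff_nonneg (r k : ℕ) : 0 ≤ lisGtCoeff r k :=
  div_nonneg (sub_nonneg.2 (mod_cast f_le_factorial k r)) (by positivity)

lemma lisGtCoeff_le (r k : ℕ) : lisGtCoeff r k ≤ 1 / k ! := by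
  have hk : (0 : ℝ) < k ! := mod_cast k.factorial_pos
  rw [lisGtCoeff, div_le_div_iff₀ (by positivity) hk]
  nlinarith [(f k r).cast_nonneg (α := ℝ)]

lemma lisGtCoeff_of_le {r k : ℕ} (hkr : k ≤ r) : lisGtCoeff r k = 0 := by
  simp [lisGtCoeff, f_eq_factorial_of_le hkr]

lemma summable_lisGtCoeff_mul_pow (r : ℕ) {y : ℝ} (hy : 0 ≤ y) :
    Summable fun k => lisGtCoeff r k * y ^ k :=
  (summable_pow_div_factorial y).of_nonneg_of_le
    (fun k => mul_nonneg (lisGtCoeff_nonneg r k) (pow_nonneg hy k))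
    fun k => by simpa [div_eq_inv_mul] using
      mul_le_mul_of_nonneg_right (lisGtCoeff_le r k) (pow_nonneg hy k)

lemma one_sub_phi_eq (r : ℕ) {y : ℝ} (hy : 0 ≤ y) :
    1 - phi r y = exp (-y) * ∑' k, lisGtCoeff r k * y ^ k := by
  have hk (k : ℕ) : (k ! : ℝ) ≠ 0 := mod_cast k.factorial_ne_zero
  have hD : D r √y = ∑' k, (y ^ k / (k !) - lisGtCoeff r k * y ^ k) :=
    tsum_congr fun k => by
      rw [pow_mul, sq_sqrt hy]
      unfold lisGtCoeff
      field_simp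
      ring
  have hexp : exp y = ∑' k, y ^ k / (k !) := by rw [exp_eq_exp_ℝ, NormedSpace.exp_eq_tsum_div]
  rw [phi, hD, (summable_pow_div_factorial y).tsum_sub (summable_lisGtCoeff_mul_pow r hy), ← hexp,
    mul_sub, ← exp_add, neg_add_cancel, exp_zero]
  ring

noncomputable def lisCoeff (k : ℕ) : ℝ := lisTotal k / (k ! : ℝ) ^ 2

lemma lisCoeff_eq_sum (k : ℕ) : lisCoeff k = ∑ r ∈ range k, lisGtCoeff r k := by
  simp only [lisCoeff, lisTotal, lisGtCoeff, ← sum_div]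
  push_cast [f_le_factorial]
  rfl

lemma lisCoeff_nonneg (k : ℕ) : 0 ≤ lisCoeff k := by
  unfold lisCoeff
  positivity

lemma lisCoeff_le (k : ℕ) : lisCoeff k ≤ k / (k !) := by
  have hk : (0 : ℝ) < k ! := mod_cast k.factorial_pos
  rw [lisCoeff, div_le_div_iff₀ (by positivity) hk]
  have : (lisTotal k : ℝ) ≤ k * k ! := mod_cast lisTotal_le k
  nlinarith

lemma lisCoeff_le_one (k : ℕ) : lisCoeff k ≤ 1 :=
  (lisCoeff_le k).trans (div_le_one_of_le₀ (mod_cast k.self_le_factorial) (by positivity))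

lemma summable_lisCoeff_mul_pow {y : ℝ} (hy : 0 ≤ y) : Summable fun k => lisCoeff k * y ^ k :=
  (summable_pow_div_factorial (2 * y)).of_nonneg_of_le
    (fun k => mul_nonneg (lisCoeff_nonneg k) (pow_nonneg hy k)) fun k => by
      have hk : (k : ℝ) ≤ 2 ^ k := mod_cast k.lt_two_pow_self.le
      calc lisCoeff k * y ^ k ≤ k / (k !) * y ^ k := by gcongr; exact lisCoeff_le k
        _ ≤ 2 ^ k / (k !) * y ^ k := by gcongr
        _ = (2 * y) ^ k / (k !) := by ring

lemma tsum_lisGtCoeff_mul_pow (k : ℕ) (y : ℝ) :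
    ∑' r, lisGtCoeff r k * y ^ k = lisCoeff k * y ^ k := by
  rw [tsum_eq_sum (s := range k) fun r hr => by
    simp [lisGtCoeff_of_le (not_lt.1 (mem_range.not.1 hr))], lisCoeff_eq_sum, sum_mul]

lemma summable_lisGtCoeff_mul_pow_prod {y : ℝ} (hy : 0 ≤ y) :
    Summable fun p : ℕ × ℕ => lisGtCoeff p.1 p.2 * y ^ p.2 := by
  rw [← (Equiv.prodComm ℕ ℕ).summable_iff]
  refine (summable_prod_of_nonneg (f := fun p : ℕ × ℕ => lisGtCoeff p.2 p.1 * y ^ p.1)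
    fun p => mul_nonneg (lisGtCoeff_nonneg _ _) (pow_nonneg hy _)).2
      ⟨fun k => summable_of_ne_finset_zero (s := range k) fun r hr => ?_,
        (summable_lisCoeff_mul_pow hy).congr fun k => (tsum_lisGtCoeff_mul_pow k y).symm⟩
  simp [lisGtCoeff_of_le (not_lt.1 (mem_range.not.1 hr))]

lemma M_eq_exp_neg_mul_tsum {y : ℝ} (hy : 0 ≤ y) :
    M y = exp (-y) * ∑' k, lisCoeff k * y ^ k := by
  simp_rw [M, one_sub_phi_eq _ hy, tsum_mul_left, ← tsum_lisGtCoeff_mul_pow]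
  exact congrArg _ (Summable.tsum_comm (f := fun r k => lisGtCoeff r k * y ^ k)
    (summable_lisGtCoeff_mul_pow_prod hy)).symm

lemma exp_neg_mul_tsum {a : ℕ → ℝ} {y : ℝ} (ha : Summable fun k => ‖a k * y ^ k‖) :
    exp (-y) * ∑' k, a k * y ^ k =
      ∑' n, (∑ ij ∈ antidiagonal n, (-1) ^ ij.1 / (ij.1 !) * a ij.2) * y ^ n := by
  have hexp : exp (-y) = ∑' i, (-1) ^ i / (i !) * y ^ i := by
    rw [exp_eq_exp_ℝ, NormedSpace.exp_eq_tsum_div]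
    exact tsum_congr fun i => by rw [neg_pow]; ring
  have hsummable : Summable fun i => ‖(-1) ^ i / (i !) * y ^ i‖ := by
    simpa [div_eq_inv_mul, mul_comm] using summable_pow_div_factorial |y|
  rw [hexp, tsum_mul_tsum_eq_tsum_sum_antidiagonal_of_summable_norm hsummable ha]
  refine tsum_congr fun n => ?_
  rw [sum_mul]
  refine sum_congr rfl fun ij hij => ?_
  rw [← mem_antidiagonal.1 hij, pow_add]
  ring

noncomputable def meanCoeff (n : ℕ) : ℝ :=
  ∑ ij ∈ antidiagonal n, (-1) ^ ij.1 / (ij.1 !) * lisCoeff ij.2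

lemma M_eq_tsum {y : ℝ} (hy : 0 ≤ y) : M y = ∑' n, meanCoeff n * y ^ n := by
  rw [M_eq_exp_neg_mul_tsum hy, exp_neg_mul_tsum]
  · rfl
  · exact (summable_lisCoeff_mul_pow hy).norm

lemma abs_meanCoeff_le (n : ℕ) : |meanCoeff n| ≤ exp 1 := by
  calc |meanCoeff n| ≤ ∑ ij ∈ antidiagonal n, 1 / (ij.1 ! : ℝ) := by
        refine (abs_sum_le_sum_abs _ _).trans (sum_le_sum fun ij _ => ?_)
        rw [abs_mul, abs_div, abs_pow, abs_neg, abs_one, one_pow, Nat.abs_cast,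
          abs_of_nonneg (lisCoeff_nonneg _)]
        exact mul_le_of_le_one_right (by positivity) (lisCoeff_le_one _)
    _ = ∑ i ∈ range (n + 1), 1 ^ i / (i ! : ℝ) := by
        simp [Nat.sum_antidiagonal_eq_sum_range_succ_mk]
    _ ≤ exp 1 := sum_le_exp_of_nonneg zero_le_one _

lemma sum_range_seven_meanCoeff (y : ℝ) :
    ∑ n ∈ range 7, meanCoeff n * y ^ n = y - (1 / 4) * y ^ 2 + (1 / 12) * y ^ 3 - (7 / 288) * y ^ 4
      + (17 / 2880) * y ^ 5 - (619 / 518400) * y ^ 6 := by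
  obtain ⟨h0, h1, h2, h3, h4, h5, h6⟩ := lisTotal_values
  simp only [meanCoeff, lisCoeff, Nat.sum_antidiagonal_eq_sum_range_succ_mk, sum_range_succ,
    range_zero, sum_empty, h0, h1, h2, h3, h4, h5, h6]
  norm_num [Nat.factorial]
  ring

lemma abs_tsum_sub_sum_range_le {a : ℕ → ℝ} {B y : ℝ} (ha : ∀ n, |a n| ≤ B) (hy₀ : 0 ≤ y)
    (hy : y ≤ 1 / 2) (N : ℕ) :
    |∑' n, a n * y ^ n - ∑ n ∈ range N, a n * y ^ n| ≤ 2 * B * y ^ N := by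
  have hy₁ : y < 1 := by linarith
  have hbound (n : ℕ) : ‖a n * y ^ n‖ ≤ B * y ^ n := by
    rw [norm_mul, norm_pow, norm_eq_abs, norm_eq_abs, abs_of_nonneg hy₀]
    exact mul_le_mul_of_nonneg_right (ha n) (pow_nonneg hy₀ n)
  have hsummable : Summable fun n => a n * y ^ n :=
    .of_norm_bounded ((summable_geometric_of_lt_one hy₀ hy₁).mul_left B) hbound
  rw [← hsummable.sum_add_tsum_nat_add N, add_sub_cancel_left, ← norm_eq_abs]
  have hB : 0 ≤ B := (abs_nonneg _).trans (ha 0)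
  calc ‖∑' n, a (n + N) * y ^ (n + N)‖ ≤ B * y ^ N * (1 - y)⁻¹ :=
        tsum_of_norm_bounded ((hasSum_geometric_of_lt_one hy₀ hy₁).mul_left (B * y ^ N))
          fun n => (hbound (n + N)).trans_eq (by ring)
    _ ≤ B * y ^ N * 2 := by
        gcongr
        rw [inv_le_comm₀ (by linarith) two_pos]
        linarith
    _ = 2 * B * y ^ N := by ring

theorem stmt12 :
    ∃ C > (0 : ℝ), ∃ y₀ > (0 : ℝ), ∀ y : ℝ, 0 < y → y < y₀ →
      |M y - (y - (1 / 4) * y ^ 2 + (1 / 12) * y ^ 3 - (7 / 288) * y ^ 4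
        + (17 / 2880) * y ^ 5 - (619 / 518400) * y ^ 6)| ≤ C * y ^ 7 := by
  refine ⟨2 * exp 1, by positivity, 1 / 2, by norm_num, fun y hy hy₀ => ?_⟩
  rw [M_eq_tsum hy.le, ← sum_range_seven_meanCoeff]
  exact abs_tsum_sub_sum_range_le abs_meanCoeff_le hy.le hy₀.le 7
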